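/- In Q_n, for distinct i,j ∉ A, the commutator [z_{A,i}, z_{A,j}] equals ∑_{D : {i,j}⊆D⊆A∪{i,j}} u(D)·(z_{A,i} - z_{A,j}), where u(D) = ∑_{C⊆D} (-1)^{|D|-|C|} r(C). -/

import Mathlib

namespace QnPaper

/-- The defining relations of the quadratic algebra `Q_n`:
for `A ⊆ {1,…,n}` and distinct `i, j ∉ A`,
`z_{A∪{i},j} + z_{A,i} = z_{A∪{j},i} + z_{A,j}` and
`z_{A∪{i},j} * z_{A,i} = z_{A∪{j},i} * z_{A,j}`. -/
inductive QRel (k : Type) [Field k] (n : ℕ) :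
    FreeAlgebra k (Finset (Fin n) × Fin n) → FreeAlgebra k (Finset (Fin n) × Fin n) → Prop
  | add_rel (A : Finset (Fin n)) (i j : Fin n) (hi : i ∉ A) (hj : j ∉ A) (hij : i ≠ j) :
      QRel k n (FreeAlgebra.ι k (insert i A, j) + FreeAlgebra.ι k (A, i))
        (FreeAlgebra.ι k (insert j A, i) + FreeAlgebra.ι k (A, j))
  | mul_rel (A : Finset (Fin n)) (i j : Fin n) (hi : i ∉ A) (hj : j ∉ A) (hij : i ≠ j) :
      QRel k n (FreeAlgebra.ι k (insert i A, j) * FreeAlgebra.ι k (A, i))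
        (FreeAlgebra.ι k (insert j A, i) * FreeAlgebra.ι k (A, j))

/-- The quadratic algebra `Q_n`. -/
abbrev Q (k : Type) [Field k] (n : ℕ) := RingQuot (QRel k n)

/-- The generator `z_{A,i}` of `Q_n` (only meaningful when `i ∉ A`). -/
def z (k : Type) [Field k] (n : ℕ) (A : Finset (Fin n)) (i : Fin n) : Q k n :=
  RingQuot.mkAlgHom k (QRel k n) (FreeAlgebra.ι k (A, i))

/-- `rAux s [i₁,…,i_r] = z_{s,i₁} + z_{s∪{i₁},i₂} + ⋯`. -/
def rAux (k : Type) [Field k] (n : ℕ) (s : Finset (Fin n)) : List (Fin n) → Q k n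
  | [] => 0
  | a :: l => z k n s a + rAux k n (insert a s) l

/-- `r(A) = z_{A,∅}`, computed using the increasing ordering of `A`. -/
def rFin (k : Type) [Field k] (n : ℕ) (A : Finset (Fin n)) : Q k n :=
  rAux k n ∅ (A.sort (· ≤ ·))

/-- `u(B) = z_{∅,B} = ∑_{D ⊆ B} (-1)^{|B|-|D|} r(D)`. -/
def uFin (k : Type) [Field k] (n : ℕ) (B : Finset (Fin n)) : Q k n :=
  ∑ D ∈ B.powerset, (-1 : Q k n) ^ (B.card - D.card) * rFin k n D

/-!
Summing `u` over all subsets of `B` gives back `r(B)` (Möbius inversion on the Boolean lattice),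
so by inclusion–exclusion the sum of `u(D)` over `{i, j} ⊆ D ⊆ B = A ∪ {i, j}` is
`r(B) - r(B ∖ {j}) - r(B ∖ {i}) + r(A)`. Since an adjacent transposition in the ordering used to
define `r` is exactly the additive relation, `r(C ∪ {i}) = r(C) + z_{C,i}`, and the sum collapses
to `z_{A∪{j},i} - z_{A,i}`. Writing `a = z_{A∪{i},j}`, `e = z_{A∪{j},i}`, `b = z_{A,i}`,
`c = z_{A,j}`, the relations `a + b = e + c` and `a b = e c` give `b c - c b = (e - b)(b - c)`
by expanding after substituting `e = a + b - c`.
-/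

open Finset

section Powerset

variable {α : Type*} [DecidableEq α]

theorem sum_Icc_neg_one_pow_card_sub {R : Type*} [Ring R] {C B : Finset α} (h : C ⊆ B) :
    ∑ D ∈ Icc C B, (-1 : R) ^ (#D - #C) = if C = B then 1 else 0 := by
  have hinj : Set.InjOn (C ∪ ·) ((B \ C).powerset : Set (Finset α)) := by
    intro E hE F hF hEF
    simp only [coe_powerset, Set.mem_preimage, Set.mem_powerset_iff, coe_subset,
      subset_sdiff] at hE hF
    simpa [union_sdiff_cancel_left hE.2.symm, union_sdiff_cancel_left hF.2.symm]
      using congrArg (· \ C) hEF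
  rw [Icc_eq_image_powerset h, sum_image hinj]
  have hcard : ∀ E ∈ (B \ C).powerset, #(C ∪ E) - #C = #E := fun E hE => by
    rw [card_union_of_disjoint (disjoint_of_subset_right (mem_powerset.1 hE) disjoint_sdiff)]
    omega
  rw [sum_congr rfl fun E hE => by rw [hcard E hE]]
  have halt := congrArg (Int.cast : ℤ → R) (sum_powerset_neg_one_pow_card (x := B \ C))
  push_cast at halt
  rw [halt]
  exact if_congr (sdiff_eq_empty_iff_subset.trans ⟨h.antisymm, fun hCB => hCB ▸ subset_rfl⟩) rfl rfl

theorem sum_powerset_sum_powerset_neg_one_pow_mul {R : Type*} [Ring R] (f : Finset α → R)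
    (B : Finset α) :
    ∑ D ∈ B.powerset, ∑ C ∈ D.powerset, (-1 : R) ^ (#D - #C) * f C = f B := by
  rw [sum_comm' (t' := B.powerset) (s' := fun C => Icc C B) fun D C => by
    simp only [mem_powerset, mem_Icc]
    exact ⟨fun ⟨hDB, hCD⟩ => ⟨⟨hCD, hDB⟩, hCD.trans hDB⟩, fun ⟨⟨hCD, hDB⟩, _⟩ => ⟨hDB, hCD⟩⟩]
  rw [sum_congr rfl fun C hC => by
    rw [← sum_mul, sum_Icc_neg_one_pow_card_sub (mem_powerset.1 hC), ite_mul, one_mul, zero_mul]]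
  simp

theorem sum_powerset_filter_mem {M : Type*} [AddCommGroup M] (g : Finset α → M)
    (B : Finset α) (i : α) :
    ∑ D ∈ B.powerset with i ∈ D, g D
      = ∑ D ∈ B.powerset, g D - ∑ D ∈ (B.erase i).powerset, g D := by
  have hnot : {D ∈ B.powerset | i ∉ D} = (B.erase i).powerset := by
    ext D
    simp only [mem_filter, mem_powerset, subset_erase]
  rw [← sum_filter_add_sum_filter_not B.powerset (i ∈ ·), hnot, add_sub_cancel_right]

theorem sum_powerset_filter_mem_and_mem {M : Type*} [AddCommGroup M] (g : Finset α → M)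
    (B : Finset α) (i j : α) :
    ∑ D ∈ B.powerset with i ∈ D ∧ j ∈ D, g D
      = (∑ D ∈ B.powerset, g D - ∑ D ∈ (B.erase j).powerset, g D)
        - (∑ D ∈ (B.erase i).powerset, g D - ∑ D ∈ ((B.erase i).erase j).powerset, g D) := by
  rw [← filter_filter, sum_filter, sum_powerset_filter_mem, ← sum_filter, ← sum_filter,
    sum_powerset_filter_mem, sum_powerset_filter_mem]

end Powerset

theorem commutator_eq_of_add_eq_of_mul_eq {R : Type*} [Ring R] {a b c e : R}
    (hadd : a + b = e + c) (hmul : a * b = e * c) :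
    b * c - c * b = (e - b) * (b - c) := by
  obtain rfl : e = a + b - c := eq_sub_of_add_eq hadd.symm
  have : (a + b - c - b) * (b - c) - (b * c - c * b) = a * b - (a + b - c) * c := by noncomm_ring
  rw [← sub_eq_zero, ← neg_sub, this, hmul, sub_self, neg_zero]

section Q

variable {k : Type} [Field k] {n : ℕ}

theorem z_insert_add_z {A : Finset (Fin n)} {i j : Fin n} (hi : i ∉ A) (hj : j ∉ A)
    (hij : i ≠ j) : z k n (insert i A) j + z k n A i = z k n (insert j A) i + z k n A j := by
  simpa only [map_add, z] using RingQuot.mkAlgHom_rel k (QRel.add_rel (k := k) A i j hi hj hij)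

theorem z_insert_mul_z {A : Finset (Fin n)} {i j : Fin n} (hi : i ∉ A) (hj : j ∉ A)
    (hij : i ≠ j) : z k n (insert i A) j * z k n A i = z k n (insert j A) i * z k n A j := by
  simpa only [map_mul, z] using RingQuot.mkAlgHom_rel k (QRel.mul_rel (k := k) A i j hi hj hij)

theorem rAux_perm {l l' : List (Fin n)} (h : l.Perm l') {s : Finset (Fin n)} (hl : l.Nodup)
    (hs : ∀ a ∈ l, a ∉ s) : rAux k n s l = rAux k n s l' := by
  induction h generalizing s with
  | nil => rfl
  | cons x _ ih =>
    rw [List.nodup_cons] at hl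
    refine congrArg (z k n s x + ·) (ih hl.2 fun a ha => ?_)
    rw [mem_insert, not_or]
    exact ⟨fun hax => hl.1 (hax ▸ ha), hs a (List.mem_cons_of_mem _ ha)⟩
  | swap x y l =>
    have hyx : y ≠ x := fun hyx => List.not_nodup_cons_of_mem (by simp [hyx]) hl
    simp only [rAux]
    rw [insert_comm, ← add_assoc, ← add_assoc, add_comm (z k n s y), add_comm (z k n s x),
      z_insert_add_z (hs y (by simp)) (hs x (by simp)) hyx]
  | trans h₁ _ ih₁ ih₂ =>
    rw [ih₁ hl hs, ih₂ (h₁.nodup hl) fun a ha => hs a (h₁.mem_iff.2 ha)]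

theorem rAux_append_singleton (s : Finset (Fin n)) (l : List (Fin n)) (i : Fin n) :
    rAux k n s (l ++ [i]) = rAux k n s l + z k n (s ∪ l.toFinset) i := by
  induction l generalizing s with
  | nil => simp [rAux]
  | cons a l ih => simp only [List.cons_append, rAux, ih, List.toFinset_cons, union_insert,
      insert_union, add_assoc]

theorem rFin_insert {A : Finset (Fin n)} {i : Fin n} (hi : i ∉ A) :
    rFin k n (insert i A) = rFin k n A + z k n A i := by
  have hperm : ((insert i A).sort (· ≤ ·)).Perm (A.sort (· ≤ ·) ++ [i]) := by
    refine List.perm_of_nodup_nodup_toFinset_eq (sort_nodup _ _) ?_ (by simp)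
    simpa [List.nodup_append] using hi
  rw [rFin, rAux_perm hperm (sort_nodup _ _) (by simp), rAux_append_singleton, sort_toFinset,
    empty_union, rFin]

theorem sum_powerset_uFin (B : Finset (Fin n)) :
    ∑ D ∈ B.powerset, uFin k n D = rFin k n B :=
  sum_powerset_sum_powerset_neg_one_pow_mul (rFin k n) B

theorem sum_uFin_of_mem_of_mem {A : Finset (Fin n)} {i j : Fin n} (hi : i ∉ A) (hj : j ∉ A)
    (hij : i ≠ j) :
    ∑ D ∈ (insert i (insert j A)).powerset with i ∈ D ∧ j ∈ D, uFin k n D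
      = z k n (insert j A) i - z k n A i := by
  have hiB : i ∉ insert j A := by simp [hij, hi]
  simp only [sum_powerset_filter_mem_and_mem, sum_powerset_uFin]
  rw [erase_insert hiB, erase_insert_of_ne hij, erase_insert hj,
    rFin_insert hiB, rFin_insert hi]
  abel

end Q

/-- `[z_{A,i}, z_{A,j}] = ∑_{{i,j} ⊆ D ⊆ A∪{i,j}} u(D)·(z_{A,i} - z_{A,j})`. -/
theorem stmt10 (k : Type) [Field k] (n : ℕ) (A : Finset (Fin n)) (i j : Fin n)
    (hi : i ∉ A) (hj : j ∉ A) (hij : i ≠ j) :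
    z k n A i * z k n A j - z k n A j * z k n A i
      = ∑ D ∈ (insert i (insert j A)).powerset.filter (fun D => i ∈ D ∧ j ∈ D),
          uFin k n D * (z k n A i - z k n A j) := by
  rw [← sum_mul, sum_uFin_of_mem_of_mem hi hj hij]
  exact commutator_eq_of_add_eq_of_mul_eq (z_insert_add_z hi hj hij) (z_insert_mul_z hi hj hij)
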